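/- arXiv:1111.1048 — 9 statements merged into one kernel-verified Lean document; each statement's English description precedes it below -/
import Mathlib

section
/- Let a, c > 0 and b, d ≥ 0, and define R₁(P₁,P₂) = log₂(1 + a·P₁/(1 + b·P₂)) and R₂(P₁,P₂) = log₂(1 + c·P₂/(1 + d·P₁)). Then for every achievable rate pair (r₁*, r₂*) with r₁*, r₂* ≥ 0, there is at most one power tuple (p₁*, p₂*) with p₁*, p₂* ≥ 0 such that R₁(p₁*,p₂*) = r₁* and R₂(p₁*,p₂*) = r₂*. -/
open Real

theorem power_tuple_unique (a b c d : ℝ) (ha : 0 < a) (hc : 0 < c)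
    (hb : 0 ≤ b) (hd : 0 ≤ d) (r₁ r₂ : ℝ) (hr₁ : 0 ≤ r₁) (hr₂ : 0 ≤ r₂)
    (p₁ p₂ q₁ q₂ : ℝ) (hp₁ : 0 ≤ p₁) (hp₂ : 0 ≤ p₂) (hq₁ : 0 ≤ q₁) (hq₂ : 0 ≤ q₂)
    (hR1p : Real.logb 2 (1 + a * p₁ / (1 + b * p₂)) = r₁)
    (hR2p : Real.logb 2 (1 + c * p₂ / (1 + d * p₁)) = r₂)
    (hR1q : Real.logb 2 (1 + a * q₁ / (1 + b * q₂)) = r₁)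
    (hR2q : Real.logb 2 (1 + c * q₂ / (1 + d * q₁)) = r₂) :
    p₁ = q₁ ∧ p₂ = q₂ := by
  have hbp₂ : (0:ℝ) < 1 + b * p₂ := by positivity
  have hbq₂ : (0:ℝ) < 1 + b * q₂ := by positivity
  have hdp₁ : (0:ℝ) < 1 + d * p₁ := by positivity
  have hdq₁ : (0:ℝ) < 1 + d * q₁ := by positivity
  have e1 : 1 + a * p₁ / (1 + b * p₂) = 1 + a * q₁ / (1 + b * q₂) :=
    Real.logb_injOn_pos (by norm_num) (Set.mem_Ioi.2 (by positivity))
      (Set.mem_Ioi.2 (by positivity)) (hR1p.trans hR1q.symm)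
  have e2 : 1 + c * p₂ / (1 + d * p₁) = 1 + c * q₂ / (1 + d * q₁) :=
    Real.logb_injOn_pos (by norm_num) (Set.mem_Ioi.2 (by positivity))
      (Set.mem_Ioi.2 (by positivity)) (hR2p.trans hR2q.symm)
  have e1' : a * p₁ / (1 + b * p₂) = a * q₁ / (1 + b * q₂) := by linarith
  have e2' : c * p₂ / (1 + d * p₁) = c * q₂ / (1 + d * q₁) := by linarith
  rw [div_eq_div_iff hbp₂.ne' hbq₂.ne'] at e1'
  rw [div_eq_div_iff hdp₁.ne' hdq₁.ne'] at e2'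
  have f1 : p₁ * (1 + b * q₂) = q₁ * (1 + b * p₂) :=
    mul_left_cancel₀ ha.ne' (by linear_combination e1')
  have f2 : p₂ * (1 + d * q₁) = q₂ * (1 + d * p₁) :=
    mul_left_cancel₀ hc.ne' (by linear_combination e2')
  have hK : (q₁ * p₂ - p₁ * q₂) * (1 + d * q₁ + b * q₂) = 0 := by
    linear_combination q₁ * f2 - q₂ * f1
  have hpos : (0:ℝ) < 1 + d * q₁ + b * q₂ := by positivity
  have hK0 : q₁ * p₂ - p₁ * q₂ = 0 := by
    rcases mul_eq_zero.1 hK with h | h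
    · exact h
    · linarith
  exact ⟨by linear_combination f1 + b * hK0, by linear_combination f2 - d * hK0⟩
end

section
/- Let a, c > 0, b, d ≥ 0, P_max > 0, α = d(1 + b·P_max), and define Q₁ = (Re(√((a − α)(a − α + a·c·P_max))) − α)/(a·d) (with d > 0). If Q₁ ≥ P_max, then the frontier function Φ₂: r₁ ↦ log₂(1 + c·P_max/(1 + (d/a)(1 + b·P_max)(2^{r₁} − 1))) is concave on the interval 0 ≤ r₁ ≤ log₂(1 + a·P_max/(1 + b·P_max)). -/
/-!
With `k = d (1 + b Pmax) / a`, `B₂ = 1 - k` and `B₁ = B₂ + c Pmax`, the frontier is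
`Φ₂ r = log₂ ((k 2^r + B₁) / (k 2^r + B₂))`. In the variable `s = log (k 2^r)` this is
`(log (eˢ + B₁) - log (eˢ + B₂)) / log 2`, whose second derivative has the sign of
`(B₁ - B₂) (e²ˢ - B₁ B₂)`; so `Φ₂` is concave as long as `(k 2^r)² ≤ B₁ B₂`.
Since `k 2^r = k + d Pmax` at the right endpoint, this condition is exactly `Q₁ ≥ Pmax`
(which also forces `k < 1`).
-/

open Real Set

theorem hasDerivAt_log_exp_add {B : ℝ} (hB : 0 ≤ B) (s : ℝ) :
    HasDerivAt (fun s => log (exp s + B)) (exp s / (exp s + B)) s :=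
  ((hasDerivAt_exp s).add_const B).log (by positivity)

theorem hasDerivAt_exp_div_exp_add {B : ℝ} (hB : 0 ≤ B) (s : ℝ) :
    HasDerivAt (fun s => exp s / (exp s + B)) (B * exp s / (exp s + B) ^ 2) s :=
  ((hasDerivAt_exp s).div ((hasDerivAt_exp s).add_const B) (by positivity)).congr_deriv (by ring)

theorem concaveOn_log_exp_add_sub_log_exp_add {B₁ B₂ : ℝ} (hB₂ : 0 < B₂)
    (hB : B₂ ≤ B₁) :
    ConcaveOn ℝ (Iic (log (B₁ * B₂) / 2))
      (fun s => log (exp s + B₁) - log (exp s + B₂)) := by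
  have hB₁ : 0 < B₁ := hB₂.trans_le hB
  have hf (s : ℝ) := (hasDerivAt_log_exp_add hB₁.le s).sub (hasDerivAt_log_exp_add hB₂.le s)
  have hf' (s : ℝ) :=
    (hasDerivAt_exp_div_exp_add hB₁.le s).sub (hasDerivAt_exp_div_exp_add hB₂.le s)
  refine concaveOn_of_hasDerivWithinAt2_nonpos (convex_Iic _)
    (HasDerivAt.continuousOn fun s _ => hf s) (fun s _ => (hf s).hasDerivWithinAt)
    (fun s _ => (hf' s).hasDerivWithinAt) fun s hs => ?_
  rw [interior_Iic, mem_Iio, lt_div_iff₀ two_pos, lt_log_iff_exp_lt (by positivity),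
    mul_comm, two_mul, exp_add] at hs
  -- `B₁ (x + B₂)² - B₂ (x + B₁)² = (B₁ - B₂)(x² - B₁ B₂)`
  have key : B₁ * (exp s + B₂) ^ 2 ≤ B₂ * (exp s + B₁) ^ 2 := by
    nlinarith [mul_le_mul_of_nonneg_left hs.le (sub_nonneg.2 hB)]
  rw [sub_nonpos, div_le_div_iff₀ (by positivity) (by positivity)]
  calc B₁ * exp s * (exp s + B₂) ^ 2 = exp s * (B₁ * (exp s + B₂) ^ 2) := by ring
    _ ≤ exp s * (B₂ * (exp s + B₁) ^ 2) := by gcongr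
    _ = B₂ * exp s * (exp s + B₁) ^ 2 := by ring

theorem concaveOn_logb_two_rpow_add_div {k B₁ B₂ R : ℝ} (hk : 0 < k) (hB₂ : 0 < B₂)
    (hB : B₂ ≤ B₁) (hR : (k * 2 ^ R) ^ 2 ≤ B₁ * B₂) :
    ConcaveOn ℝ (Iic R) (fun r : ℝ => logb 2 ((k * 2 ^ r + B₁) / (k * 2 ^ r + B₂))) := by
  have hB₁ : 0 < B₁ := hB₂.trans_le hB
  let g : ℝ →ᵃ[ℝ] ℝ :=
    (LinearMap.lsmul ℝ ℝ (log 2)).toAffineMap + AffineMap.const ℝ ℝ (log k)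
  have hg (r : ℝ) : exp (g r) = k * 2 ^ r := by
    simp [g, exp_add, exp_log hk, rpow_def_of_pos two_pos, mul_comm]
  have hsub : Iic R ⊆ g ⁻¹' Iic (log (B₁ * B₂) / 2) := by
    intro r (hr : r ≤ R)
    rw [mem_preimage, mem_Iic, le_div_iff₀ two_pos, ← exp_le_exp, exp_log (mul_pos hB₁ hB₂),
      mul_two, exp_add, hg, ← sq]
    exact hR.trans' (by gcongr; norm_num)
  refine (((concaveOn_log_exp_add_sub_log_exp_add hB₂ hB).comp_affineMap g).subset hsub
    (convex_Iic R)).smul (inv_nonneg.2 (log_nonneg one_le_two)) |>.congr fun r _ => ?_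
  simp only [Function.comp_apply, smul_eq_mul, hg]
  rw [logb, log_div (by positivity) (by positivity), div_eq_inv_mul]

theorem phi2_concave_of_Q1_ge (a b c d Pmax : ℝ) (ha : 0 < a) (hc : 0 < c)
    (hb : 0 ≤ b) (hd : 0 < d) (hP : 0 < Pmax)
    (hQ : (Real.sqrt ((a - d * (1 + b * Pmax)) *
            (a - d * (1 + b * Pmax) + a * c * Pmax)) - d * (1 + b * Pmax)) / (a * d)
          ≥ Pmax) :
    ConcaveOn ℝ (Icc (0:ℝ) (Real.logb 2 (1 + a * Pmax / (1 + b * Pmax))))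
      (fun r₁ : ℝ =>
        Real.logb 2
          (1 + c * Pmax / (1 + (d / a) * (1 + b * Pmax) * ((2:ℝ) ^ r₁ - 1)))) := by
  set k := d / a * (1 + b * Pmax) with hk
  have hk0 : 0 < k := by positivity
  rw [show d * (1 + b * Pmax) = a * k by rw [hk]; field_simp] at hQ
  have hsq : (a * (k + d * Pmax)) ^ 2 ≤ a ^ 2 * ((1 - k + c * Pmax) * (1 - k)) := by
    rw [ge_iff_le, le_div_iff₀ (by positivity)] at hQ
    have h := (le_sqrt' (by positivity)).1 (show a * (k + d * Pmax) ≤ _ by linarith)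
    exact h.trans_eq (by ring)
  have hkey : (k + d * Pmax) ^ 2 ≤ (1 - k + c * Pmax) * (1 - k) := by
    rw [mul_pow] at hsq
    exact le_of_mul_le_mul_left hsq (by positivity)
  -- for `k ≥ 1` the right side of `hkey` is at most `(k - 1)² < (k + d Pmax)²`
  have hk1 : k < 1 := by nlinarith [mul_pos hd hP, mul_pos hc hP]
  have hR : (k * 2 ^ logb 2 (1 + a * Pmax / (1 + b * Pmax))) ^ 2 ≤
      (1 - k + c * Pmax) * (1 - k) := by
    rwa [rpow_logb two_pos (by norm_num) (by positivity),
      show k * (1 + a * Pmax / (1 + b * Pmax)) = k + d * Pmax by rw [hk]; field_simp]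
  refine ((concaveOn_logb_two_rpow_add_div hk0 (sub_pos.2 hk1) (by nlinarith) hR).subset
    Icc_subset_Iic_self (convex_Icc _ _)).congr fun r _ => ?_
  have hD : 1 + k * (2 ^ r - 1) = k * 2 ^ r + (1 - k) := by ring
  have : 0 < k * 2 ^ r + (1 - k) := by nlinarith [rpow_pos_of_pos two_pos r]
  dsimp only
  rw [hD, one_add_div this.ne']
  congr 2
  ring
end

section
/- Let a, c > 0, b, d ≥ 0, P_max > 0, α = d(1 + b·P_max), d > 0, and Q₁ = (Re(√((a − α)(a − α + a·c·P_max))) − α)/(a·d). If Q₁ ≤ 0, then the frontier function Φ₂: r₁ ↦ log₂(1 + c·P_max/(1 + (d/a)(1 + b·P_max)(2^{r₁} − 1))) is convex on 0 ≤ r₁ ≤ log₂(1 + a·P_max/(1 + b·P_max)). -/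
/-!
With `k = (d/a)(1 + b Pmax)`, `B = 1 - k`, `A = B + c Pmax` and `s = log k + r₁ log 2`, the
frontier is `(log (A + eˢ) - log (B + eˢ)) / log 2`, whose second derivative in `s` has the sign of
`(A - B)(e²ˢ - A B)`. For `r₁ ≥ 0` we have `eˢ ≥ k`, and `Q₁ ≤ 0` amounts to `A B ≤ k²`.
-/

open Real Set

lemma hasDerivAt_log_add_exp {C s : ℝ} (h : C + exp s ≠ 0) :
    HasDerivAt (fun s => log (C + exp s)) (exp s / (C + exp s)) s :=
  ((hasDerivAt_exp s).const_add C).log h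

lemma hasDerivAt_exp_div_add_exp {C s : ℝ} (h : C + exp s ≠ 0) :
    HasDerivAt (fun s => exp s / (C + exp s)) (C * exp s / (C + exp s) ^ 2) s := by
  refine ((hasDerivAt_exp s).div ((hasDerivAt_exp s).const_add C) h).congr_deriv ?_
  ring

theorem convexOn_log_add_exp_sub_log_add_exp {A B s₀ : ℝ} (hBA : B ≤ A) (hB : 0 < B + exp s₀)
    (hAB : A * B ≤ exp s₀ ^ 2) :
    ConvexOn ℝ (Ici s₀) (fun s => log (A + exp s) - log (B + exp s)) := by
  have hBpos : ∀ s ∈ Ici s₀, 0 < B + exp s := fun s hs =>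
    hB.trans_le (by gcongr; exact hs)
  have hApos : ∀ s ∈ Ici s₀, 0 < A + exp s := fun s hs => (hBpos s hs).trans_le (by linarith)
  refine convexOn_of_hasDerivWithinAt2_nonneg (convex_Ici s₀)
    (f' := fun s => exp s / (A + exp s) - exp s / (B + exp s))
    (f'' := fun s => A * exp s / (A + exp s) ^ 2 - B * exp s / (B + exp s) ^ 2) ?_ ?_ ?_ ?_
  · exact (ContinuousOn.log (by fun_prop) fun s hs => (hApos s hs).ne').sub
      (ContinuousOn.log (by fun_prop) fun s hs => (hBpos s hs).ne')
  all_goals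
    simp only [interior_Ici]
    intro s hs
    have hA := (hApos s (Ioi_subset_Ici_self hs)).ne'
    have hB := (hBpos s (Ioi_subset_Ici_self hs)).ne'
  · exact ((hasDerivAt_log_add_exp hA).sub (hasDerivAt_log_add_exp hB)).hasDerivWithinAt
  · exact ((hasDerivAt_exp_div_add_exp hA).sub (hasDerivAt_exp_div_add_exp hB)).hasDerivWithinAt
  · have hsq : A * B ≤ exp s ^ 2 :=
      hAB.trans (pow_le_pow_left₀ (exp_nonneg _) (exp_le_exp.2 hs.le) 2)
    have hf'' : A * exp s / (A + exp s) ^ 2 - B * exp s / (B + exp s) ^ 2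
        = exp s * (A - B) * (exp s ^ 2 - A * B) / ((A + exp s) ^ 2 * (B + exp s) ^ 2) := by
      field_simp
      ring
    rw [hf'']
    exact div_nonneg (mul_nonneg (mul_nonneg (exp_nonneg s) (sub_nonneg.2 hBA)) (sub_nonneg.2 hsq))
      (by positivity)

theorem convexOn_logb_one_add_div_one_add_mul_rpow_sub_one {β k c : ℝ} (hβ : 1 < β) (hk : 0 < k)
    (hc : 0 ≤ c) (hkc : (1 - k + c) * (1 - k) ≤ k ^ 2) :
    ConvexOn ℝ (Ici (0 : ℝ)) (fun r => logb β (1 + c / (1 + k * (β ^ r - 1)))) := by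
  have hL : 0 < log β := log_pos hβ
  have hf := convexOn_log_add_exp_sub_log_add_exp (A := 1 - k + c) (B := 1 - k) (s₀ := log k)
    (by linarith) (by rw [exp_log hk]; norm_num) (by rwa [exp_log hk])
  have hg : ConvexOn ℝ (Ici (0 : ℝ)) _ :=
    ((hf.translate_right (log k)).comp_linearMap (LinearMap.mulRight ℝ (log β))).subset
      (fun r (hr : 0 ≤ r) => by simpa using mul_nonneg hr hL.le) (convex_Ici 0)
  refine (hg.smul (inv_nonneg.2 hL.le)).congr fun r hr => ?_
  have hkr : exp (log k + r * log β) = k * β ^ r := by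
    rw [exp_add, exp_log hk, rpow_def_of_pos (zero_lt_one.trans hβ), mul_comm r]
  have hden : 0 < 1 - k + k * β ^ r := by
    nlinarith [one_le_rpow hβ.le (show 0 ≤ r from hr)]
  have harg : 1 + c / (1 + k * (β ^ r - 1)) = (1 - k + c + k * β ^ r) / (1 - k + k * β ^ r) := by
    rw [show 1 + k * (β ^ r - 1) = 1 - k + k * β ^ r by ring]
    field_simp
    ring
  simp only [Function.comp_apply, LinearMap.mulRight_apply, smul_eq_mul, hkr]
  rw [harg, logb, log_div (by linarith) hden.ne']
  ring

lemma mul_le_sq_of_sqrt_le {a c α : ℝ} (ha : 0 < a) (h : √((a - α) * (a - α + a * c)) ≤ α) :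
    (1 - α / a + c) * (1 - α / a) ≤ (α / a) ^ 2 := by
  have hsq := (sqrt_le_iff.1 h).2
  have : a ^ 2 * ((1 - α / a + c) * (1 - α / a)) ≤ a ^ 2 * (α / a) ^ 2 := by
    convert hsq using 1 <;> field_simp
  exact le_of_mul_le_mul_left this (by positivity)

theorem phi2_convex_of_Q1_le (a b c d Pmax : ℝ) (ha : 0 < a) (hc : 0 < c)
    (hb : 0 ≤ b) (hd : 0 < d) (hP : 0 < Pmax)
    (hQ : (Real.sqrt ((a - d * (1 + b * Pmax)) *
            (a - d * (1 + b * Pmax) + a * c * Pmax)) - d * (1 + b * Pmax)) / (a * d)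
          ≤ 0) :
    ConvexOn ℝ (Icc (0:ℝ) (Real.logb 2 (1 + a * Pmax / (1 + b * Pmax))))
      (fun r₁ : ℝ =>
        Real.logb 2
          (1 + c * Pmax / (1 + (d / a) * (1 + b * Pmax) * ((2:ℝ) ^ r₁ - 1)))) := by
  have hsqrt : √((a - d * (1 + b * Pmax)) * (a - d * (1 + b * Pmax) + a * (c * Pmax)))
      ≤ d * (1 + b * Pmax) := by
    rw [← mul_assoc]
    exact sub_nonpos.1 (by simpa using (div_le_iff₀ (by positivity)).1 hQ)
  rw [div_mul_eq_mul_div]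
  exact (convexOn_logb_one_add_div_one_add_mul_rpow_sub_one one_lt_two (by positivity)
    (by positivity) (mul_le_sq_of_sqrt_le ha hsqrt)).subset Icc_subset_Ici_self (convex_Icc _ _)
end

section
/- Let a, b, P_max > 0 with b ≥ √(1 + a·P_max)/P_max. Then log₂(1 + a·P_max) − (log₂(1 + a·P_max/(1 + b·P_max)))²/log₂(1 + a·P_max) ≥ log₂(1 + a·P_max/(1 + b·P_max)); equivalently, (1 + a·P_max)(1 + b·P_max)/(1 + a·P_max + b·P_max) ≥ ((1 + a·P_max + b·P_max)/(1 + b·P_max))^γ with γ = 1, i.e., TDM time-sharing between the single-user points dominates simultaneous full-power transmission in the symmetric channel. -/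
open Real

theorem tdm_dominates_symmetric (a b Pmax : ℝ) (ha : 0 < a) (hb : 0 < b)
    (hP : 0 < Pmax) (hth : b ≥ Real.sqrt (1 + a * Pmax) / Pmax) :
    (Real.logb 2 (1 + a * Pmax) -
        (Real.logb 2 (1 + a * Pmax / (1 + b * Pmax))) ^ 2 /
          Real.logb 2 (1 + a * Pmax)
      ≥ Real.logb 2 (1 + a * Pmax / (1 + b * Pmax)))
    ∧
    ((1 + a * Pmax) * (1 + b * Pmax) / (1 + a * Pmax + b * Pmax)
      ≥ ((1 + a * Pmax + b * Pmax) / (1 + b * Pmax)) ^ ((1:ℝ))) := by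
  set x := a * Pmax with hxdef
  set y := b * Pmax with hydef
  have hx : 0 < x := mul_pos ha hP
  have hy : 0 < y := mul_pos hb hP
  have hxs : (0:ℝ) ≤ 1 + x := by linarith
  have hyge : Real.sqrt (1 + x) ≤ y := by
    have := (div_le_iff₀ hP).mp hth
    linarith [this]
  have hy2 : 1 + x ≤ y ^ 2 := by
    have h1 := Real.sq_sqrt hxs
    nlinarith [Real.sqrt_nonneg (1 + x)]
  have hyp : 0 < 1 + y := by linarith
  have hxyp : 0 < 1 + x + y := by linarith
  have hkey : ((1 + x + y) / (1 + y)) ^ 2 ≤ 1 + x := by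
    rw [div_pow, div_le_iff₀ (by positivity)]
    nlinarith [mul_nonneg hx.le (sub_nonneg.mpr hy2)]
  have hrw : 1 + x / (1 + y) = (1 + x + y) / (1 + y) := by
    field_simp; ring
  constructor
  · rw [hrw]
    set L := Real.logb 2 (1 + x) with hLdef
    set M := Real.logb 2 ((1 + x + y) / (1 + y)) with hMdef
    have hL : 0 < L := Real.logb_pos one_lt_two (by linarith)
    have hM : 0 ≤ M := Real.logb_nonneg one_lt_two
      ((one_le_div hyp).mpr (by linarith))
    have hLM : 2 * M ≤ L := by
      have h1 : Real.logb 2 (((1 + x + y) / (1 + y)) ^ 2) ≤ L := by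
        exact Real.logb_le_logb_of_le one_lt_two (by positivity) hkey
      rwa [Real.logb_pow] at h1
    have hdiv : M ^ 2 / L ≤ M / 2 := by
      rw [div_le_div_iff₀ hL two_pos]
      nlinarith
    linarith
  · rw [Real.rpow_one, ge_iff_le, div_le_div_iff₀ hyp hxyp]
    nlinarith [mul_nonneg hx.le (sub_nonneg.mpr hy2)]
end

section
/- Let a, P_max > 0 and b ≥ √(1 + a·P_max)/P_max. Then, in the symmetric 2-user channel (c = a, d = b), both inflection thresholds Q₁ and Q₂ are ≤ 0, where Q_sym = (Re(√((a − θ)(a − θ + a²·P_max))) − θ)/(a·b) with θ = b + b²·P_max and Re(√x) = √x if x ≥ 0 and 0 otherwise. Consequently both power-control frontiers Φ₁ and Φ₂ are convex. -/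
open Real Set

lemma aux_convexOn (p q s t x y : ℝ)
    (h1 : ∀ r ∈ Icc x y, 0 < p * Real.exp (Real.log 2 * r) + q)
    (h2 : ∀ r ∈ Icc x y, 0 < s * Real.exp (Real.log 2 * r) + t)
    (hkey : ∀ r ∈ Icc x y, s * t * (p * Real.exp (Real.log 2 * r) + q) ^ 2
        ≤ p * q * (s * Real.exp (Real.log 2 * r) + t) ^ 2) :
    ConvexOn ℝ (Icc x y) (fun r =>
      Real.log (p * Real.exp (Real.log 2 * r) + q)
        - Real.log (s * Real.exp (Real.log 2 * r) + t)) := by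
  have hsub : interior (Icc x y) ⊆ Icc x y := interior_subset
  have hE : ∀ z : ℝ, HasDerivAt (fun r => Real.exp (Real.log 2 * r))
      (Real.exp (Real.log 2 * z) * Real.log 2) z := by
    intro z
    have h : HasDerivAt (fun r : ℝ => Real.log 2 * r) (Real.log 2) z := by
      simpa using (hasDerivAt_id z).const_mul (Real.log 2)
    exact h.exp
  apply convexOn_of_hasDerivWithinAt2_nonneg (convex_Icc x y)
    (f' := fun r =>
      p * (Real.exp (Real.log 2 * r) * Real.log 2) / (p * Real.exp (Real.log 2 * r) + q)
      - s * (Real.exp (Real.log 2 * r) * Real.log 2) / (s * Real.exp (Real.log 2 * r) + t))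
    (f'' := fun r =>
      (p * (Real.exp (Real.log 2 * r) * Real.log 2 * Real.log 2) * (p * Real.exp (Real.log 2 * r) + q)
        - p * (Real.exp (Real.log 2 * r) * Real.log 2) * (p * (Real.exp (Real.log 2 * r) * Real.log 2)))
        / (p * Real.exp (Real.log 2 * r) + q) ^ 2
      - (s * (Real.exp (Real.log 2 * r) * Real.log 2 * Real.log 2) * (s * Real.exp (Real.log 2 * r) + t)
        - s * (Real.exp (Real.log 2 * r) * Real.log 2) * (s * (Real.exp (Real.log 2 * r) * Real.log 2)))
        / (s * Real.exp (Real.log 2 * r) + t) ^ 2)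
  · apply ContinuousOn.sub
    · exact ContinuousOn.log (by fun_prop) (fun r hr => (h1 r hr).ne')
    · exact ContinuousOn.log (by fun_prop) (fun r hr => (h2 r hr).ne')
  · intro z hz
    have hz' := hsub hz
    have d1 : HasDerivAt (fun r => p * Real.exp (Real.log 2 * r) + q)
        (p * (Real.exp (Real.log 2 * z) * Real.log 2)) z := ((hE z).const_mul p).add_const q
    have d2 : HasDerivAt (fun r => s * Real.exp (Real.log 2 * r) + t)
        (s * (Real.exp (Real.log 2 * z) * Real.log 2)) z := ((hE z).const_mul s).add_const t
    have l1 := d1.log (h1 z hz').ne'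
    have l2 := d2.log (h2 z hz').ne'
    exact ((l1.sub l2).congr_deriv (by ring)).hasDerivWithinAt
  · intro z hz
    have hz' := hsub hz
    have dE : HasDerivAt (fun r => p * (Real.exp (Real.log 2 * r) * Real.log 2))
        (p * (Real.exp (Real.log 2 * z) * Real.log 2 * Real.log 2)) z :=
      ((hE z).mul_const (Real.log 2)).const_mul p
    have dE' : HasDerivAt (fun r => s * (Real.exp (Real.log 2 * r) * Real.log 2))
        (s * (Real.exp (Real.log 2 * z) * Real.log 2 * Real.log 2)) z :=
      ((hE z).mul_const (Real.log 2)).const_mul s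
    have d1 : HasDerivAt (fun r => p * Real.exp (Real.log 2 * r) + q)
        (p * (Real.exp (Real.log 2 * z) * Real.log 2)) z := ((hE z).const_mul p).add_const q
    have d2 : HasDerivAt (fun r => s * Real.exp (Real.log 2 * r) + t)
        (s * (Real.exp (Real.log 2 * z) * Real.log 2)) z := ((hE z).const_mul s).add_const t
    have q1 := dE.div d1 (h1 z hz').ne'
    have q2 := dE'.div d2 (h2 z hz').ne'
    exact (q1.sub q2).hasDerivWithinAt
  · intro z hz
    have hz' := hsub hz
    have hp1 := h1 z hz'
    have hp2 := h2 z hz'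
    have hk := hkey z hz'
    have hEp : (0:ℝ) < Real.exp (Real.log 2 * z) := Real.exp_pos _
    rw [sub_nonneg, div_le_div_iff₀ (pow_pos hp2 2) (pow_pos hp1 2)]
    nlinarith [mul_le_mul_of_nonneg_left hk
      (mul_nonneg (sq_nonneg (Real.log 2)) hEp.le)]

set_option maxHeartbeats 1000000 in
theorem symmetric_Qsym_nonpos_and_frontiers_convex (a b Pmax : ℝ)
    (ha : 0 < a) (hb : 0 < b) (hP : 0 < Pmax)
    (hth : b ≥ Real.sqrt (1 + a * Pmax) / Pmax) :
    (Real.sqrt ((a - (b + b ^ 2 * Pmax)) *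
          (a - (b + b ^ 2 * Pmax) + a ^ 2 * Pmax)) - (b + b ^ 2 * Pmax)) / (a * b)
      ≤ 0
    ∧
    ConvexOn ℝ
      (Icc (Real.logb 2 (1 + a * Pmax / (1 + b * Pmax))) (Real.logb 2 (1 + a * Pmax)))
      (fun r₁ : ℝ =>
        Real.logb 2
          (1 + (a / b) * (a * Pmax - ((2:ℝ) ^ r₁ - 1)) /
            (((2:ℝ) ^ r₁ - 1) * (1 + b * Pmax))))
    ∧
    ConvexOn ℝ
      (Icc (0:ℝ) (Real.logb 2 (1 + a * Pmax / (1 + b * Pmax))))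
      (fun r₁ : ℝ =>
        Real.logb 2
          (1 + a * Pmax / (1 + (b / a) * (1 + b * Pmax) * ((2:ℝ) ^ r₁ - 1)))) := by
  have l2 : (0:ℝ) < Real.log 2 := Real.log_pos one_lt_two
  have hsP : Real.sqrt (1 + a * Pmax) ≤ b * Pmax := by
    rw [ge_iff_le, div_le_iff₀ hP] at hth; exact hth
  have hs0 : (0:ℝ) ≤ 1 + a * Pmax := by positivity
  have hsq : 1 + a * Pmax ≤ (b * Pmax) ^ 2 := by
    nlinarith [Real.sq_sqrt hs0, Real.sqrt_nonneg (1 + a * Pmax)]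
  have hbP1 : 1 ≤ b * Pmax := by nlinarith [mul_pos hb hP, mul_pos ha hP]
  have hθ : a < b + b ^ 2 * Pmax := by
    have h : a * Pmax < (b + b ^ 2 * Pmax) * Pmax := by nlinarith [mul_pos ha hP]
    exact lt_of_mul_lt_mul_right h hP.le
  have hθp : (0:ℝ) < b + b ^ 2 * Pmax := by positivity
  have hbP : (0:ℝ) < 1 + b * Pmax := by positivity
  have hz1 : (0:ℝ) < 1 + a * Pmax / (1 + b * Pmax) := by positivity
  have hz1' : (1:ℝ) < 1 + a * Pmax / (1 + b * Pmax) := by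
    have : 0 < a * Pmax / (1 + b * Pmax) := by positivity
    linarith
  have hEX : Real.exp (Real.log 2 * Real.logb 2 (1 + a * Pmax / (1 + b * Pmax)))
      = 1 + a * Pmax / (1 + b * Pmax) := by
    rw [Real.logb, mul_div_assoc', mul_comm, mul_div_assoc, div_self l2.ne', mul_one,
      Real.exp_log hz1]
  refine ⟨?_, ?_, ?_⟩
  · -- part 1
    have hX : (a - (b + b ^ 2 * Pmax)) * (a - (b + b ^ 2 * Pmax) + a ^ 2 * Pmax)
        ≤ (b + b ^ 2 * Pmax) ^ 2 := by
      nlinarith [mul_pos ha hθp, mul_pos (mul_pos (mul_pos ha ha) hP) (sub_pos.2 hθ),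
        mul_pos ha (sub_pos.2 hθ)]
    have hs : Real.sqrt ((a - (b + b ^ 2 * Pmax)) *
        (a - (b + b ^ 2 * Pmax) + a ^ 2 * Pmax)) ≤ b + b ^ 2 * Pmax := by
      calc Real.sqrt ((a - (b + b ^ 2 * Pmax)) * (a - (b + b ^ 2 * Pmax) + a ^ 2 * Pmax))
          ≤ Real.sqrt ((b + b ^ 2 * Pmax) ^ 2) := Real.sqrt_le_sqrt hX
        _ = b + b ^ 2 * Pmax := Real.sqrt_sq hθp.le
    exact div_nonpos_iff.mpr (Or.inr ⟨sub_nonpos.2 hs, (mul_pos ha hb).le⟩)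
  · -- part 2
    set X := Real.logb 2 (1 + a * Pmax / (1 + b * Pmax)) with hXdef
    set Y := Real.logb 2 (1 + a * Pmax) with hYdef
    have hu1 : ∀ r ∈ Icc X Y, 1 < Real.exp (Real.log 2 * r) := by
      intro r hr
      have h := Real.exp_le_exp.mpr (mul_le_mul_of_nonneg_left hr.1 l2.le)
      rw [hEX] at h
      linarith
    have hcx : ConvexOn ℝ (Icc X Y) (fun r =>
        Real.log ((b + b ^ 2 * Pmax - a) * Real.exp (Real.log 2 * r)
            + (a + a ^ 2 * Pmax - (b + b ^ 2 * Pmax)))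
          - Real.log (1 * Real.exp (Real.log 2 * r) + (-1))) := by
      apply aux_convexOn
      · intro r hr
        have h := hu1 r hr
        nlinarith [mul_pos (sub_pos.2 hθ) (sub_pos.2 h), mul_pos (mul_pos ha ha) hP]
      · intro r hr
        have h := hu1 r hr
        linarith
      · intro r hr
        have h := hu1 r hr
        have hu2 : 1 < Real.exp (Real.log 2 * r) ^ 2 := by nlinarith
        nlinarith [mul_pos (mul_pos (mul_pos ha ha) hP)
          (show 0 < (b + b ^ 2 * Pmax - a) * Real.exp (Real.log 2 * r) ^ 2
              + (a + a ^ 2 * Pmax - (b + b ^ 2 * Pmax)) by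
            nlinarith [mul_pos (sub_pos.2 hθ) (sub_pos.2 hu2),
              mul_pos (mul_pos ha ha) hP])]
    have hcx2 := (hcx.add_const (-(Real.log (b + b ^ 2 * Pmax)))).smul
      (inv_nonneg.2 l2.le)
    refine hcx2.congr ?_
    intro r hr
    have h := hu1 r hr
    have hrp : (2:ℝ) ^ r = Real.exp (Real.log 2 * r) := Real.rpow_def_of_pos two_pos r
    simp only [Pi.add_apply, smul_eq_mul]
    rw [hrp]
    have hum : Real.exp (Real.log 2 * r) - 1 ≠ 0 := by linarith
    have hnum : (0:ℝ) < (b + b ^ 2 * Pmax - a) * Real.exp (Real.log 2 * r)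
        + (a + a ^ 2 * Pmax - (b + b ^ 2 * Pmax)) := by
      nlinarith [mul_pos (sub_pos.2 hθ) (sub_pos.2 h), mul_pos (mul_pos ha ha) hP]
    have hins : 1 + a / b * (a * Pmax - (Real.exp (Real.log 2 * r) - 1)) /
          ((Real.exp (Real.log 2 * r) - 1) * (1 + b * Pmax))
        = ((b + b ^ 2 * Pmax - a) * Real.exp (Real.log 2 * r)
            + (a + a ^ 2 * Pmax - (b + b ^ 2 * Pmax)))
          / ((b + b ^ 2 * Pmax) * (Real.exp (Real.log 2 * r) - 1)) := by
      have hDp : ((Real.exp (Real.log 2 * r) - 1) * (1 + b * Pmax)) ≠ 0 :=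
        mul_ne_zero hum hbP.ne'
      rw [show (1:ℝ) + a / b * (a * Pmax - (Real.exp (Real.log 2 * r) - 1)) /
            ((Real.exp (Real.log 2 * r) - 1) * (1 + b * Pmax))
          = ((Real.exp (Real.log 2 * r) - 1) * (1 + b * Pmax)
              + a / b * (a * Pmax - (Real.exp (Real.log 2 * r) - 1)))
            / ((Real.exp (Real.log 2 * r) - 1) * (1 + b * Pmax)) by
        rw [add_div, div_self hDp],
        div_eq_div_iff hDp (mul_ne_zero hθp.ne' hum)]
      field_simp
      ring
    rw [hins, Real.logb, Real.log_div hnum.ne'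
        (mul_ne_zero hθp.ne' hum), Real.log_mul hθp.ne' hum]
    have hone : (1:ℝ) * Real.exp (Real.log 2 * r) + (-1)
        = Real.exp (Real.log 2 * r) - 1 := by ring
    rw [hone]
    field_simp
    ring
  · -- part 3
    set X := Real.logb 2 (1 + a * Pmax / (1 + b * Pmax)) with hXdef
    have hu1 : ∀ r ∈ Icc (0:ℝ) X, 1 ≤ Real.exp (Real.log 2 * r) := by
      intro r hr
      have h := Real.exp_le_exp.mpr (mul_nonneg l2.le hr.1)
      simpa using h
    have hcx : ConvexOn ℝ (Icc (0:ℝ) X) (fun r =>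
        Real.log ((b + b ^ 2 * Pmax) * Real.exp (Real.log 2 * r)
            + (a + a ^ 2 * Pmax - (b + b ^ 2 * Pmax)))
          - Real.log ((b + b ^ 2 * Pmax) * Real.exp (Real.log 2 * r)
            + (a - (b + b ^ 2 * Pmax)))) := by
      apply aux_convexOn
      · intro r hr
        have h := hu1 r hr
        nlinarith [mul_nonneg hθp.le (sub_nonneg.2 h), mul_pos (mul_pos ha ha) hP]
      · intro r hr
        have h := hu1 r hr
        nlinarith [mul_nonneg hθp.le (sub_nonneg.2 h)]
      · intro r hr
        have h := hu1 r hr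
        have k1 : (a - (b + b ^ 2 * Pmax)) * (a + a ^ 2 * Pmax - (b + b ^ 2 * Pmax))
            < (b + b ^ 2 * Pmax) ^ 2 := by
          nlinarith [mul_pos ha (sub_pos.2 hθ),
            mul_pos (mul_pos (mul_pos ha ha) hP) (sub_pos.2 hθ), mul_pos ha hθp]
        have hθu : b + b ^ 2 * Pmax ≤ (b + b ^ 2 * Pmax) * Real.exp (Real.log 2 * r) := by
          nlinarith
        have k2 : (b + b ^ 2 * Pmax) ^ 2
            ≤ ((b + b ^ 2 * Pmax) * Real.exp (Real.log 2 * r)) ^ 2 :=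
          pow_le_pow_left₀ hθp.le hθu 2
        nlinarith [mul_nonneg (mul_nonneg hθp.le (mul_nonneg (mul_nonneg ha.le ha.le) hP.le))
          (sub_nonneg.2 (k1.le.trans k2))]
    have hcx2 := hcx.smul (inv_nonneg.2 l2.le)
    refine hcx2.congr ?_
    intro r hr
    have h := hu1 r hr
    have hrp : (2:ℝ) ^ r = Real.exp (Real.log 2 * r) := Real.rpow_def_of_pos two_pos r
    simp only [smul_eq_mul]
    rw [hrp]
    have hden : (0:ℝ) < (b + b ^ 2 * Pmax) * Real.exp (Real.log 2 * r)
        + (a - (b + b ^ 2 * Pmax)) := by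
      nlinarith [mul_nonneg hθp.le (sub_nonneg.2 h)]
    have hnum : (0:ℝ) < (b + b ^ 2 * Pmax) * Real.exp (Real.log 2 * r)
        + (a + a ^ 2 * Pmax - (b + b ^ 2 * Pmax)) := by
      nlinarith [mul_nonneg hθp.le (sub_nonneg.2 h), mul_pos (mul_pos ha ha) hP]
    have hd : (0:ℝ) < 1 + b / a * (1 + b * Pmax) * (Real.exp (Real.log 2 * r) - 1) := by
      have h0 : 0 ≤ b / a * (1 + b * Pmax) * (Real.exp (Real.log 2 * r) - 1) :=
        mul_nonneg (mul_nonneg (div_pos hb ha).le hbP.le) (by linarith)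
      linarith
    have hins : 1 + a * Pmax / (1 + b / a * (1 + b * Pmax) * (Real.exp (Real.log 2 * r) - 1))
        = ((b + b ^ 2 * Pmax) * Real.exp (Real.log 2 * r)
            + (a + a ^ 2 * Pmax - (b + b ^ 2 * Pmax)))
          / ((b + b ^ 2 * Pmax) * Real.exp (Real.log 2 * r)
            + (a - (b + b ^ 2 * Pmax))) := by
      rw [show (1:ℝ) + a * Pmax / (1 + b / a * (1 + b * Pmax) * (Real.exp (Real.log 2 * r) - 1))
          = ((1 + b / a * (1 + b * Pmax) * (Real.exp (Real.log 2 * r) - 1)) + a * Pmax)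
            / (1 + b / a * (1 + b * Pmax) * (Real.exp (Real.log 2 * r) - 1)) by
        rw [add_div, div_self hd.ne'],
        div_eq_div_iff hd.ne' hden.ne']
      field_simp
      ring
    rw [hins, Real.logb, Real.log_div hnum.ne' hden.ne']
    rw [inv_mul_eq_div]
end

section
/- Let n ≥ 2 be an integer and a, b, P_max > 0. Then the inequality (1/√n)·log₂(1 + a·P_max) ≥ √n·log₂(1 + a·P_max/(1 + (n−1)·b·P_max)) holds if and only if b ≥ ((a·P_max/((1 + a·P_max)^{1/n} − 1)) − 1)/((n−1)·P_max). -/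
open Real

theorem tdm_optimality_n_user (n : ℕ) (hn : 2 ≤ n) (a b Pmax : ℝ)
    (ha : 0 < a) (hb : 0 < b) (hP : 0 < Pmax) :
    (1 / Real.sqrt n * Real.logb 2 (1 + a * Pmax)
      ≥ Real.sqrt n * Real.logb 2 (1 + a * Pmax / (1 + (n - 1) * b * Pmax)))
    ↔
    b ≥ (a * Pmax / ((1 + a * Pmax) ^ ((1:ℝ) / n) - 1) - 1) / ((n - 1) * Pmax) := by
  have hn2 : (2:ℝ) ≤ (n:ℝ) := by exact_mod_cast hn
  have hnpos : (0:ℝ) < n := by linarith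
  have hm : (0:ℝ) < (n:ℝ) - 1 := by linarith
  have hx : 0 < a * Pmax := mul_pos ha hP
  set x := a * Pmax with hxdef
  set D : ℝ := 1 + ((n:ℝ) - 1) * b * Pmax with hDdef
  have hD1 : 1 < D := by
    have : 0 < ((n:ℝ) - 1) * b * Pmax := by positivity
    simp [hDdef]; linarith
  have hD0 : 0 < D := by linarith
  have hs : Real.sqrt n > 0 := Real.sqrt_pos.mpr hnpos
  have hss : Real.sqrt n * Real.sqrt n = n := Real.mul_self_sqrt (le_of_lt hnpos)
  have hz0 : 0 < 1 + x / D := by positivity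
  have hw1 : 1 < 1 + x := by linarith
  have ht : 1 < (1 + x) ^ ((1:ℝ) / n) := by
    rw [show ((1:ℝ)/n) = ((n:ℝ))⁻¹ by ring]
    refine Real.one_lt_rpow_iff_of_pos (by linarith) |>.mpr ?_
    exact Or.inl ⟨hw1, by positivity⟩
  have htpos : 0 < (1 + x) ^ ((1:ℝ) / n) - 1 := by linarith
  -- step 1: multiply through by sqrt n
  have step1 : (1 / Real.sqrt n * Real.logb 2 (1 + x)
      ≥ Real.sqrt n * Real.logb 2 (1 + x / D))
      ↔ (n:ℝ) * Real.logb 2 (1 + x / D) ≤ Real.logb 2 (1 + x) := by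
    rw [ge_iff_le, one_div, ← div_eq_inv_mul, le_div_iff₀ hs, mul_right_comm, hss]
  rw [step1]
  -- step 2: remove logs
  have step2 : ((n:ℝ) * Real.logb 2 (1 + x / D) ≤ Real.logb 2 (1 + x))
      ↔ (1 + x / D) ^ (n:ℕ) ≤ 1 + x := by
    rw [← Real.logb_pow, Real.logb_le_logb (by norm_num : (1:ℝ) < 2) (by positivity)
      (by linarith)]
  rw [step2]
  -- step 3: take n-th root
  have step3 : ((1 + x / D) ^ (n:ℕ) ≤ 1 + x) ↔ 1 + x / D ≤ (1 + x) ^ ((1:ℝ) / n) := by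
    rw [show ((1:ℝ)/n) = ((n:ℝ))⁻¹ by ring,
      Real.le_rpow_inv_iff_of_pos (le_of_lt hz0) (by linarith) hnpos,
      Real.rpow_natCast]
  rw [step3]
  -- step 4: algebra
  rw [ge_iff_le, div_le_iff₀ (by positivity)]
  constructor
  · intro h
    have h' : x / D ≤ (1 + x) ^ ((1:ℝ) / n) - 1 := by linarith
    have h'' : x / ((1 + x) ^ ((1:ℝ) / n) - 1) ≤ D := by
      rw [div_le_iff₀ htpos]
      rw [div_le_iff₀ hD0] at h'
      nlinarith
    simp only [hDdef] at h''
    nlinarith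
  · intro h
    have h' : x / ((1 + x) ^ ((1:ℝ) / n) - 1) ≤ D := by
      simp only [hDdef]; nlinarith
    rw [div_le_iff₀ htpos] at h'
    have : x / D ≤ (1 + x) ^ ((1:ℝ) / n) - 1 := by
      rw [div_le_iff₀ hD0]; nlinarith
    linarith
end

section
/- Let a, P_max > 0 and for integers n ≥ 2 define b*_n = ((a·P_max/((1 + a·P_max)^{1/n} − 1)) − 1)/((n−1)·P_max). Then the sequence (b*_n)_{n ≥ 2} is monotonically increasing in n. -/
/-! Writing `L = log (1 + a Pmax)`, `u = L / (2n)` and `v = L / 2 - u`, one finds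
`Pmax · b*_n = √(1 + a Pmax) · (sinh v / v) / (sinh u / u)`. As `n` grows, `u` decreases and `v`
increases, and `w ↦ sinh w / w` is increasing on `(0, ∞)` because it is the slope of the chord of
the convex function `sinh` from the origin. -/

open Real Set

lemma convexOn_sinh_Ici : ConvexOn ℝ (Ici 0) sinh := by
  refine MonotoneOn.convexOn_of_deriv (convex_Ici 0) continuous_sinh.continuousOn
    differentiable_sinh.differentiableOn ?_
  rw [Real.deriv_sinh, interior_Ici]
  intro x hx y hy hxy
  rw [cosh_le_cosh, abs_of_pos hx, abs_of_pos hy]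
  exact hxy

lemma monotoneOn_sinh_div_self : MonotoneOn (fun u => sinh u / u) (Ioi 0) := by
  intro x hx y hy hxy
  simpa using convexOn_sinh_Ici.secant_mono self_mem_Ici (mem_Ici.2 hx.le) (mem_Ici.2 hy.le)
    hx.ne' hy.ne' hxy

lemma exp_two_mul_sub_one (w : ℝ) : exp (2 * w) - 1 = 2 * exp w * sinh w := by
  rw [sinh_eq, two_mul, exp_add, exp_neg]
  field_simp

lemma exp_ratio_sub_one_div_eq {u v : ℝ} (hu : 0 < u) (hv : 0 < v) :
    ((exp (2 * (u + v)) - 1) / (exp (2 * u) - 1) - 1) / (v / u)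
      = exp (u + v) * ((sinh v / v) / (sinh u / u)) := by
  have hsplit : exp (2 * (u + v)) - 1 - (exp (2 * u) - 1) = exp (2 * u) * (exp (2 * v) - 1) := by
    rw [mul_add, exp_add]
    ring
  rw [div_sub_one (by rw [exp_two_mul_sub_one]; positivity), hsplit, exp_two_mul_sub_one,
    exp_two_mul_sub_one, exp_add, two_mul u, exp_add]
  field_simp

lemma log_div_two_mul_pos {c k : ℝ} (hc : 1 < c) (hk : 1 < k) :
    0 < log c / (2 * k) ∧ 0 < log c / 2 - log c / (2 * k) := by
  have hL : 0 < log c := log_pos hc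
  refine ⟨by positivity, ?_⟩
  rw [sub_pos, div_lt_div_iff_of_pos_left hL (by positivity) two_pos]
  linarith

lemma root_ratio_sub_one_div_eq {c k : ℝ} (hc : 1 < c) (hk : 1 < k) :
    ((c - 1) / (c ^ (1 / k) - 1) - 1) / (k - 1)
      = √c * ((sinh (log c / 2 - log c / (2 * k)) / (log c / 2 - log c / (2 * k)))
          / (sinh (log c / (2 * k)) / (log c / (2 * k)))) := by
  obtain ⟨hu, hv⟩ := log_div_two_mul_pos hc hk
  have hc0 : 0 < c := by linarith
  have hL : log c ≠ 0 := (log_pos hc).ne'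
  have h := exp_ratio_sub_one_div_eq hu hv
  rwa [show 2 * (log c / (2 * k) + (log c / 2 - log c / (2 * k))) = log c by ring, exp_log hc0,
    show 2 * (log c / (2 * k)) = log c * (1 / k) by ring, ← rpow_def_of_pos hc0,
    show (log c / 2 - log c / (2 * k)) / (log c / (2 * k)) = k - 1 by field_simp,
    show log c / (2 * k) + (log c / 2 - log c / (2 * k)) = log c * (1 / 2) by ring,
    ← rpow_def_of_pos hc0, ← sqrt_eq_rpow] at h

lemma root_ratio_sub_one_div_mono {c m n : ℝ} (hc : 1 < c) (hm : 1 < m) (hmn : m ≤ n) :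
    ((c - 1) / (c ^ (1 / m) - 1) - 1) / (m - 1) ≤ ((c - 1) / (c ^ (1 / n) - 1) - 1) / (n - 1) := by
  have hn : 1 < n := hm.trans_le hmn
  obtain ⟨hum, hvm⟩ := log_div_two_mul_pos hc hm
  obtain ⟨hun, hvn⟩ := log_div_two_mul_pos hc hn
  have hL : 0 < log c := log_pos hc
  rw [root_ratio_sub_one_div_eq hc hm, root_ratio_sub_one_div_eq hc hn]
  gcongr ?_ * (?_ / ?_)
  · exact monotoneOn_sinh_div_self hvm hvn (by gcongr)
  · exact monotoneOn_sinh_div_self hun hum (by gcongr)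

theorem tdm_threshold_monotone (a Pmax : ℝ) (ha : 0 < a) (hP : 0 < Pmax) :
    ∀ m n : ℕ, 2 ≤ m → m ≤ n →
      (a * Pmax / ((1 + a * Pmax) ^ ((1:ℝ) / m) - 1) - 1) / ((m - 1) * Pmax)
        ≤ (a * Pmax / ((1 + a * Pmax) ^ ((1:ℝ) / n) - 1) - 1) / ((n - 1) * Pmax) := by
  intro m n hm hmn
  have hc : 1 < 1 + a * Pmax := lt_add_of_pos_right 1 (mul_pos ha hP)
  have hm' : (1 : ℝ) < m := by exact_mod_cast hm
  have h := root_ratio_sub_one_div_mono hc hm' (Nat.cast_le.2 hmn)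
  rw [add_sub_cancel_left] at h
  rw [div_mul_eq_div_div, div_mul_eq_div_div]
  exact div_le_div_of_nonneg_right h hP.le
end

section
/- Let a, c > 0, b, d ≥ 0, P_max > 0. For any r₁ with log₂(1 + a·P_max/(1 + b·P_max)) ≤ r₁ ≤ log₂(1 + a·P_max), the value P₂ = (1/b)·(a·P_max/(2^{r₁} − 1) − 1) (with b > 0) satisfies 0 ≤ P₂ ≤ P_max and log₂(1 + a·P_max/(1 + b·P₂)) = r₁; moreover among all (P₁, P₂) ∈ [0, P_max]² with log₂(1 + a·P₁/(1 + b·P₂)) = r₁, the rate R₂ = log₂(1 + c·P₂/(1 + d·P₁)) is maximized at P₁ = P_max and this value of P₂. -/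
/-!
Put `E = 2 ^ r₁ - 1`, the SINR user 1 needs for rate `r₁`. On the constraint curve
`a P₁ = E (1 + b P₂)` we have `P₂ = (a P₁ / E - 1) / b`, so the SINR of user 2 is proportional to
`(α P₁ - β) / (1 + d P₁)` with `α, β > 0`; such a ratio is nondecreasing in `P₁ ≥ 0`, hence
largest at `P₁ = Pmax`. The two bounds on `r₁` say exactly `a Pmax / (1 + b Pmax) ≤ E ≤ a Pmax`,
i.e. that the resulting `P₂` lies in `[0, Pmax]`.
-/

open Real Set

lemma inv_mul_sub_one_mem_Icc {a b P E : ℝ} (hb : 0 < b) (hP : 0 ≤ P) (hE : 0 < E)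
    (hlo : a * P / (1 + b * P) ≤ E) (hhi : E ≤ a * P) :
    (1 / b) * (a * P / E - 1) ∈ Icc 0 P := by
  have hden : 0 < 1 + b * P := by positivity
  have hone_le : 1 ≤ a * P / E := (one_le_div hE).mpr hhi
  have hle_den : a * P / E ≤ 1 + b * P :=
    (div_le_iff₀ hE).mpr (by rw [div_le_iff₀ hden] at hlo; linarith)
  constructor
  · exact mul_nonneg (by positivity) (by linarith)
  · rw [one_div_mul_eq_div, div_le_iff₀ hb]
    linarith

lemma one_add_mul_inv_mul_sub_one {b x : ℝ} (hb : b ≠ 0) :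
    1 + b * ((1 / b) * (x - 1)) = x := by
  field_simp
  ring

lemma eq_inv_mul_sub_one_of_div_eq {a b E P Q : ℝ} (hb : b ≠ 0) (hE : E ≠ 0)
    (hQ : 1 + b * Q ≠ 0) (h : a * P / (1 + b * Q) = E) :
    Q = (1 / b) * (a * P / E - 1) := by
  rw [div_eq_iff hQ] at h
  field_simp
  linear_combination -h

lemma sub_div_one_add_mul_le {α β d x y : ℝ} (hd : 0 ≤ d) (hx : 0 ≤ x) (hxy : x ≤ y)
    (hαβ : 0 ≤ α + β * d) :
    (α * x - β) / (1 + d * x) ≤ (α * y - β) / (1 + d * y) := by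
  have hdx : 0 < 1 + d * x := by positivity
  have hdy : 0 < 1 + d * y := by nlinarith
  rw [div_le_div_iff₀ hdx hdy]
  nlinarith [mul_nonneg hαβ (sub_nonneg.mpr hxy)]

lemma inv_mul_sub_one_div_le {a b d E x y : ℝ} (ha : 0 ≤ a) (hb : 0 < b) (hd : 0 ≤ d)
    (hE : 0 < E) (hx : 0 ≤ x) (hxy : x ≤ y) :
    (1 / b) * (a * x / E - 1) / (1 + d * x) ≤ (1 / b) * (a * y / E - 1) / (1 + d * y) := by
  have key := sub_div_one_add_mul_le (α := a / (b * E)) (β := 1 / b) hd hx hxy (by positivity)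
  convert key using 2 <;> field_simp

theorem interval2_frontier (a b c d Pmax : ℝ)
    (ha : 0 < a) (hc : 0 < c) (hb : 0 < b) (hd : 0 ≤ d) (hP : 0 < Pmax)
    (r₁ : ℝ)
    (hr₁ : Real.logb 2 (1 + a * Pmax / (1 + b * Pmax)) ≤ r₁)
    (hr₂ : r₁ ≤ Real.logb 2 (1 + a * Pmax)) :
    0 ≤ (1 / b) * (a * Pmax / ((2:ℝ) ^ r₁ - 1) - 1)
    ∧ (1 / b) * (a * Pmax / ((2:ℝ) ^ r₁ - 1) - 1) ≤ Pmax
    ∧ Real.logb 2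
        (1 + a * Pmax / (1 + b * ((1 / b) * (a * Pmax / ((2:ℝ) ^ r₁ - 1) - 1)))) = r₁
    ∧ ∀ P₁ ∈ Icc (0:ℝ) Pmax, ∀ P₂ ∈ Icc (0:ℝ) Pmax,
        Real.logb 2 (1 + a * P₁ / (1 + b * P₂)) = r₁ →
        Real.logb 2 (1 + c * P₂ / (1 + d * P₁))
          ≤ Real.logb 2
              (1 + c * ((1 / b) * (a * Pmax / ((2:ℝ) ^ r₁ - 1) - 1)) /
                (1 + d * Pmax)) := by
  set E := (2:ℝ) ^ r₁ - 1 with hE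
  have hlo : a * Pmax / (1 + b * Pmax) ≤ E :=
    le_sub_iff_add_le'.mpr ((logb_le_iff_le_rpow one_lt_two (by positivity)).mp hr₁)
  have hhi : E ≤ a * Pmax :=
    sub_le_iff_le_add'.mpr ((le_logb_iff_rpow_le one_lt_two (by positivity)).mp hr₂)
  have hEpos : 0 < E := lt_of_lt_of_le (by positivity) hlo
  have hrate : logb 2 (1 + E) = r₁ := by rw [hE, add_sub_cancel, logb_rpow two_pos (by norm_num)]
  obtain ⟨hQ₀, hQP⟩ := inv_mul_sub_one_mem_Icc hb hP.le hEpos hlo hhi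
  refine ⟨hQ₀, hQP, ?_, ?_⟩
  · rwa [one_add_mul_inv_mul_sub_one hb.ne', div_div_cancel₀ (by positivity)]
  rintro P₁ ⟨hP₁₀, hP₁⟩ P₂ ⟨hP₂₀, -⟩ hrate₁
  have hsinr : a * P₁ / (1 + b * P₂) = E := by
    rw [logb_eq_iff_rpow_eq two_pos (by norm_num) (by positivity)] at hrate₁
    linarith
  have hP₂ := eq_inv_mul_sub_one_of_div_eq hb.ne' hEpos.ne' (by positivity) hsinr
  refine logb_le_logb_of_le one_lt_two (by positivity) ?_
  rw [hP₂, mul_div_assoc c, mul_div_assoc c]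
  gcongr 1 + c * ?_
  exact inv_mul_sub_one_div_le ha.le hb hd hEpos hP₁₀ hP₁
end

section
/- Let a, c > 0, b, d ≥ 0, P_max > 0, and let r₁ satisfy 0 ≤ r₁ ≤ log₂(1 + a·P_max/(1 + b·P_max)). Then among all (P₁, P₂) ∈ [0, P_max]² with log₂(1 + a·P₁/(1 + b·P₂)) = r₁, the rate R₂(P₁, P₂) = log₂(1 + c·P₂/(1 + d·P₁)) is maximized by taking P₂ = P_max (and P₁ = (1/a)(1 + b·P_max)(2^{r₁} − 1)), giving maximal value log₂(1 + c·P_max/(1 + (d/a)(1 + b·P_max)(2^{r₁} − 1))). -/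
/-!
Write `t = 2 ^ r₁ - 1`. The rate constraint on user 1 pins its power to
`P₁ = (1 + b P₂) t / a`, so along the constraint user 2 sees the SINR
`c P₂ / ((1 + d t / a) + (d b t / a) P₂)`, a fractional-linear function of `P₂` with
nonnegative coefficients and hence nondecreasing: user 2 should transmit at full power.
-/

open Real Set

/-- Rate of a link with gain `g` and power `P` when power `Q` arrives as interference with gain
`h`; interference is treated as noise and gains are noise-normalized. -/
noncomputable def tinRate (g h P Q : ℝ) : ℝ := logb 2 (1 + g * P / (1 + h * Q))

noncomputable def requiredPower (g h Q r : ℝ) : ℝ := (1 / g) * (1 + h * Q) * (2 ^ r - 1)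

section

variable {g h P Q r : ℝ}

lemma tinRate_eq_iff (hg : 0 ≤ g) (hh : 0 ≤ h) (hP : 0 ≤ P) (hQ : 0 ≤ Q) :
    tinRate g h P Q = r ↔ g * P = (1 + h * Q) * (2 ^ r - 1) := by
  have hD : 0 < 1 + h * Q := by positivity
  rw [tinRate, logb_eq_iff_rpow_eq two_pos (by norm_num) (by positivity)]
  constructor <;> intro heq <;> field_simp at heq ⊢ <;> linarith

lemma requiredPower_nonneg (hg : 0 ≤ g) (hh : 0 ≤ h) (hQ : 0 ≤ Q) (hr : 0 ≤ r) :
    0 ≤ requiredPower g h Q r := by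
  have : 0 ≤ (2 : ℝ) ^ r - 1 := sub_nonneg.2 (one_le_rpow one_le_two hr)
  unfold requiredPower
  positivity

lemma tinRate_requiredPower (hg : 0 < g) (hh : 0 ≤ h) (hQ : 0 ≤ Q) (hr : 0 ≤ r) :
    tinRate g h (requiredPower g h Q r) Q = r := by
  rw [tinRate_eq_iff hg.le hh (requiredPower_nonneg hg.le hh hQ hr) hQ, requiredPower]
  field_simp

lemma eq_requiredPower_of_tinRate_eq (hg : 0 < g) (hh : 0 ≤ h) (hP : 0 ≤ P) (hQ : 0 ≤ Q)
    (hrate : tinRate g h P Q = r) : P = requiredPower g h Q r := by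
  rw [tinRate_eq_iff hg.le hh hP hQ] at hrate
  rw [requiredPower]
  field_simp
  linarith

lemma requiredPower_le_iff (hg : 0 < g) (hh : 0 ≤ h) (hP : 0 ≤ P) (hQ : 0 ≤ Q) :
    requiredPower g h Q r ≤ P ↔ r ≤ tinRate g h P Q := by
  have hD : 0 < 1 + h * Q := by positivity
  have hreq : requiredPower g h Q r = (1 + h * Q) * (2 ^ r - 1) / g := by
    rw [requiredPower]; ring
  rw [hreq, div_le_iff₀ hg, tinRate, le_logb_iff_rpow_le one_lt_two (by positivity),
    ← sub_le_iff_le_add', le_div_iff₀ hD, mul_comm P, mul_comm (1 + h * Q)]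

end

lemma monotoneOn_mul_div_add_mul {c α β : ℝ} (hc : 0 ≤ c) (hα : 0 < α) (hβ : 0 ≤ β) :
    MonotoneOn (fun x => c * x / (α + β * x)) (Ici 0) := by
  intro x hx y hy hxy
  simp only [mem_Ici] at hx hy
  rw [div_le_div_iff₀ (by positivity) (by positivity)]
  nlinarith [mul_le_mul_of_nonneg_left hxy (mul_nonneg hc hα.le)]

lemma monotoneOn_tinRate_requiredPower {a b c d r : ℝ} (ha : 0 < a) (hb : 0 ≤ b) (hc : 0 ≤ c)
    (hd : 0 ≤ d) (hr : 0 ≤ r) :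
    MonotoneOn (fun Q => tinRate c d Q (requiredPower a b Q r)) (Ici 0) := by
  intro x hx y hy hxy
  obtain ⟨t, ht, hrt⟩ : ∃ t, 0 ≤ t ∧ (2 : ℝ) ^ r - 1 = t :=
    ⟨_, sub_nonneg.2 (one_le_rpow one_le_two hr), rfl⟩
  have hden (Q : ℝ) : 1 + d * requiredPower a b Q r = (1 + d / a * t) + d / a * b * t * Q := by
    rw [requiredPower, hrt]; ring
  have hsinr := monotoneOn_mul_div_add_mul hc (by positivity : 0 < 1 + d / a * t)
    (by positivity : 0 ≤ d / a * b * t) hx hy hxy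
  simp only [mem_Ici] at hx
  simp only [tinRate, hden]
  exact logb_le_logb_of_le one_lt_two (by positivity) (add_le_add_right hsinr 1)

theorem interval1_frontier (a b c d Pmax : ℝ)
    (ha : 0 < a) (hc : 0 < c) (hb : 0 ≤ b) (hd : 0 ≤ d) (hP : 0 < Pmax)
    (r₁ : ℝ) (hr₁ : 0 ≤ r₁)
    (hr₂ : r₁ ≤ Real.logb 2 (1 + a * Pmax / (1 + b * Pmax))) :
    Real.logb 2
        (1 + a * ((1 / a) * (1 + b * Pmax) * ((2:ℝ) ^ r₁ - 1)) / (1 + b * Pmax)) = r₁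
    ∧ (1 / a) * (1 + b * Pmax) * ((2:ℝ) ^ r₁ - 1) ∈ Icc (0:ℝ) Pmax
    ∧ Real.logb 2
        (1 + c * Pmax /
          (1 + d * ((1 / a) * (1 + b * Pmax) * ((2:ℝ) ^ r₁ - 1))))
        = Real.logb 2
            (1 + c * Pmax / (1 + (d / a) * (1 + b * Pmax) * ((2:ℝ) ^ r₁ - 1)))
    ∧ ∀ P₁ ∈ Icc (0:ℝ) Pmax, ∀ P₂ ∈ Icc (0:ℝ) Pmax,
        Real.logb 2 (1 + a * P₁ / (1 + b * P₂)) = r₁ →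
        Real.logb 2 (1 + c * P₂ / (1 + d * P₁))
          ≤ Real.logb 2
              (1 + c * Pmax / (1 + (d / a) * (1 + b * Pmax) * ((2:ℝ) ^ r₁ - 1))) := by
  have hfrontier : tinRate c d Pmax (requiredPower a b Pmax r₁)
      = logb 2 (1 + c * Pmax / (1 + (d / a) * (1 + b * Pmax) * ((2:ℝ) ^ r₁ - 1))) := by
    rw [tinRate, requiredPower]; ring_nf
  refine ⟨tinRate_requiredPower ha hb hP.le hr₁,
    ⟨requiredPower_nonneg ha.le hb hP.le hr₁, (requiredPower_le_iff ha hb hP.le hP.le).2 hr₂⟩,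
    hfrontier, ?_⟩
  rintro P₁ ⟨hP₁, -⟩ P₂ ⟨hP₂, hP₂max⟩ hrate
  obtain rfl := eq_requiredPower_of_tinRate_eq ha hb hP₁ hP₂ hrate
  exact hfrontier ▸ monotoneOn_tinRate_requiredPower ha hb hc.le hd hr₁ hP₂ hP.le hP₂max
end
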